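/- arXiv:2010.01369 — 4 statements merged into one kernel-verified Lean document; each statement's English description precedes it below -/
import Mathlib

section
/- With probability at least 1−δ over uniform initialization W ∈ {±1/k}^{q×k} with q > 2^{k+3}log(2^k/δ), for every k-pattern f (f(x) = g(x_{j*...j*+k}) for some g : {±1}^k → {±1} and index j*), there exist readout vectors u*^{(1)},...,u*^{(n−k)} ∈ R^q with ‖u*^{(j*)}‖ ≤ 2^{k+1}k/√q and u*^{(j)} = 0 for j ≠ j*, such that the depth-2 CNN h_{u*,W,b}(x) = Σ_j ⟨u*^{(j)}, σ(W x_{j...j+k} + b)⟩ equals f(x) for all x ∈ {±1}^n. -/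
/-!
A neuron with weight row `b/k` (`b` a sign pattern) and bias `1/k - 1` has pre-activation
`(1 - 2 d)/k` on a window with sign pattern `p`, where `d` is the Hamming distance of `b` and `p`;
so it outputs `1/k` on the window `b` and `0` on every other window. If every sign pattern
occurs at least `t` times among the `q` rows of `W`, then putting `k g(b) / #{rows with pattern b}`
on each unit of position `j*` reproduces `g` exactly, with `‖u‖² ≤ k² 2^k / t`.
A fixed pattern occurs fewer than `t` times for at most `2^t (2^k - 1/2)^q` of the `2^{kq}`
initializations (weight each by `2^{-#occurrences}`); a union bound over the `2^k` patterns and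
`t = ⌊q/2^{k+2}⌋ + 1` bound the failure probability by `2^{k+t} exp(-q/2^{k+1}) ≤ δ`.
-/

open Finset Real

def signVec {ι : Type*} (p : ι → Bool) : ι → ℝ := fun l => if p l then 1 else -1

lemma exists_signVec_eq {ι : Type*} {z : ι → ℝ} (hz : ∀ l, z l = 1 ∨ z l = -1) :
    ∃ p, signVec p = z :=
  ⟨fun l => decide (z l = 1), funext fun l => by
    rcases hz l with h | h <;> norm_num [signVec, h]⟩

section Neuron

variable {k : ℕ}

noncomputable def neuron (b : Fin k → Bool) (z : Fin k → ℝ) : ℝ :=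
  max (∑ l : Fin k, (if b l then ((1 : ℝ) / k) else -(1 / k)) * z l + (1 / k - 1)) 0

lemma preactivation_signVec (hk : 0 < k) (b p : Fin k → Bool) :
    ∑ l : Fin k, (if b l then ((1 : ℝ) / k) else -(1 / k)) * signVec p l + (1 / k - 1)
      = (1 - 2 * hammingDist b p) / k := by
  have hterm : ∀ l, (if b l then ((1 : ℝ) / k) else -(1 / k)) * signVec p l
      = 1 / k - 2 / k * if b l ≠ p l then 1 else 0 := by
    intro l
    cases b l <;> cases hp : p l <;> simp [signVec, hp] <;> ring
  simp only [hterm, sum_sub_distrib, ← mul_sum, sum_boole, sum_const, card_univ,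
    Fintype.card_fin, nsmul_eq_mul, hammingDist]
  field_simp
  ring

lemma neuron_signVec (hk : 0 < k) (b p : Fin k → Bool) :
    neuron b (signVec p) = if b = p then (1 : ℝ) / k else 0 := by
  rw [neuron, preactivation_signVec hk]
  by_cases h : b = p
  · simp [h]
  · have : (1 : ℝ) ≤ hammingDist b p := by
      exact_mod_cast Nat.one_le_iff_ne_zero.2 (hammingDist_ne_zero.2 h)
    rw [if_neg h]
    exact max_eq_right (div_nonpos_of_nonpos_of_nonneg (by linarith) (by positivity))

end Neuron

section Occurrences

variable {ι α : Type*} [Fintype α] [DecidableEq α]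

def occurrences [Fintype ι] (s : ι → α) (p : α) : ℕ := #{i | s i = p}

lemma sum_inv_occurrences_sq [Fintype ι] (s : ι → α) :
    ∑ i, ((occurrences s (s i) : ℝ) ^ 2)⁻¹ = ∑ p, (occurrences s p : ℝ)⁻¹ := by
  rw [← sum_fiberwise univ s]
  refine sum_congr rfl fun p _ => ?_
  rw [sum_congr rfl fun i hi => by rw [(mem_filter.1 hi).2], sum_const, nsmul_eq_mul]
  change (occurrences s p : ℝ) * _ = _
  rcases eq_or_ne (occurrences s p : ℝ) 0 with h | h
  · simp [h]
  · field_simp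

lemma card_filter_occurrences_lt_le {q : ℕ} (p : α) (t : ℕ) :
    (#{s : Fin q → α | occurrences s p < t} : ℝ)
      ≤ 2 ^ t * (Fintype.card α - 1 / 2) ^ q := by
  have hweight : ∀ s : Fin q → α, occurrences s p < t →
      (1 : ℝ) ≤ 2 ^ t * (1 / 2) ^ occurrences s p := by
    intro s hs
    calc (1 : ℝ) = 2 ^ occurrences s p * (1 / 2) ^ occurrences s p := by
          rw [← mul_pow]; norm_num
      _ ≤ 2 ^ t * (1 / 2) ^ occurrences s p := by gcongr; norm_num
  have hprod : ∀ s : Fin q → α,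
      ((1 : ℝ) / 2) ^ occurrences s p = ∏ i, if s i = p then (1 : ℝ) / 2 else 1 := by
    intro s
    rw [prod_ite, prod_const, prod_const, one_pow, mul_one]
    rfl
  have hsum : ∑ a : α, (if a = p then (1 : ℝ) / 2 else 1) = Fintype.card α - 1 / 2 := by
    calc ∑ a : α, (if a = p then (1 : ℝ) / 2 else 1)
        = ∑ a : α, (1 - if a = p then (1 : ℝ) / 2 else 0) :=
          sum_congr rfl fun a _ => by split_ifs <;> norm_num
      _ = _ := by simp [sum_sub_distrib]
  calc (#{s : Fin q → α | occurrences s p < t} : ℝ)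
      ≤ ∑ s ∈ {s : Fin q → α | occurrences s p < t},
          2 ^ t * (1 / 2) ^ occurrences s p := by
        rw [card_eq_sum_ones, Nat.cast_sum, Nat.cast_one]
        exact sum_le_sum fun s hs => hweight s (mem_filter.1 hs).2
    _ ≤ ∑ s : Fin q → α, 2 ^ t * (1 / 2) ^ occurrences s p :=
        sum_le_sum_of_subset_of_nonneg (filter_subset _ _) fun _ _ _ => by positivity
    _ = 2 ^ t * (Fintype.card α - 1 / 2) ^ q := by
        simp only [← mul_sum, hprod]
        rw [← Fintype.sum_pow (fun a => if a = p then (1 : ℝ) / 2 else 1), hsum]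

lemma card_filter_exists_occurrences_lt_le (q t : ℕ) :
    (#{s : Fin q → α | ∃ p, occurrences s p < t} : ℝ)
      ≤ Fintype.card α * (2 ^ t * (Fintype.card α - 1 / 2) ^ q) := by
  have hunion : univ.filter (fun s : Fin q → α => ∃ p, occurrences s p < t)
      = univ.biUnion fun p => univ.filter fun s : Fin q → α => occurrences s p < t := by
    ext s; simp
  calc (#{s : Fin q → α | ∃ p, occurrences s p < t} : ℝ)
      ≤ ∑ p : α, (#{s : Fin q → α | occurrences s p < t} : ℝ) := by
        rw [hunion]; exact_mod_cast card_biUnion_le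
    _ ≤ ∑ _p : α, 2 ^ t * (Fintype.card α - 1 / 2 : ℝ) ^ q :=
        sum_le_sum fun p _ => card_filter_occurrences_lt_le p t
    _ = _ := by rw [sum_const, card_univ, nsmul_eq_mul]

lemma one_sub_le_card_filter_forall_le_occurrences_div [Nonempty α] (q t : ℕ) :
    1 - Fintype.card α * 2 ^ t * exp (-(q / (2 * Fintype.card α)))
      ≤ #{s : Fin q → α | ∀ p, t ≤ occurrences s p} / (Fintype.card α : ℝ) ^ q := by
  have hsplit : (#{s : Fin q → α | ∀ p, t ≤ occurrences s p} : ℝ)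
      + #{s : Fin q → α | ∃ p, occurrences s p < t} = (Fintype.card α : ℝ) ^ q := by
    have := card_filter_add_card_filter_not (s := (univ : Finset (Fin q → α)))
      (fun s => ∀ p, t ≤ occurrences s p)
    simp only [not_forall, not_le, card_univ, Fintype.card_fun, Fintype.card_fin] at this
    exact_mod_cast this
  set m : ℝ := (Fintype.card α : ℝ)
  have hm1 : 1 ≤ m := Nat.one_le_cast.2 Fintype.card_pos
  have hm : 0 < m := by linarith
  have hdecay : (m - 1 / 2) ^ q ≤ m ^ q * exp (-(q / (2 * m))) := by
    calc (m - 1 / 2) ^ q = m ^ q * (1 - 1 / (2 * m)) ^ q := by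
          rw [← mul_pow]; congr 1; field_simp
      _ ≤ m ^ q * exp (-(1 / (2 * m))) ^ q := by
          gcongr
          · rw [sub_nonneg, div_le_one (by positivity)]; linarith
          · exact one_sub_le_exp_neg _
      _ = m ^ q * exp (-(q / (2 * m))) := by
          rw [← exp_nat_mul]; ring_nf
  rw [le_div_iff₀ (by positivity)]
  nlinarith [card_filter_exists_occurrences_lt_le (α := α) q t, pow_pos hm q,
    mul_le_mul_of_nonneg_left hdecay (by positivity : (0 : ℝ) ≤ m * 2 ^ t)]

end Occurrences

lemma two_pow_mul_two_pow_mul_exp_le {k q : ℕ} {δ : ℝ} (hk : 0 < k) (hδ : 0 < δ)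
    (hδ1 : δ < 1)
    (hq : (q : ℝ) > 2 ^ (k + 3) * log (2 ^ k / δ)) :
    (2 : ℝ) ^ k * 2 ^ (q / 2 ^ (k + 2) + 1) * exp (-(q / (2 * 2 ^ k))) ≤ δ := by
  set t := q / 2 ^ (k + 2) + 1
  set Q : ℝ := q / 2 ^ (k + 2)
  have hL : log (2 ^ k / δ) = k * log 2 - log δ := by
    rw [log_div (by positivity) hδ.ne', log_pow]
  have hlog2 : 0 < log 2 := log_pos one_lt_two
  have hlog2_le : log 2 ≤ 1 := by linarith [log_le_sub_one_of_pos two_pos]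
  have hL_ge : log 2 ≤ log (2 ^ k / δ) := by
    have : (1 : ℝ) ≤ k := by exact_mod_cast hk
    nlinarith [log_neg hδ hδ1]
  have hQ : 2 * log (2 ^ k / δ) < Q := by
    rw [lt_div_iff₀ (by positivity)]
    linarith [show (2 : ℝ) ^ (k + 3) * log (2 ^ k / δ) = 2 * log (2 ^ k / δ) * 2 ^ (k + 2) by
      ring]
  have ht : (t : ℝ) ≤ Q + 1 := by
    simp only [t, Q, Nat.cast_add, Nat.cast_one]
    gcongr
    exact_mod_cast Nat.cast_div_le
  have hexp : (q : ℝ) / (2 * 2 ^ k) = 2 * Q := by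
    simp only [Q]; field_simp; ring
  have htwo_pow : ∀ m : ℕ, (2 : ℝ) ^ m = exp (m * log 2) := fun m => by
    rw [exp_nat_mul, exp_log two_pos]
  rw [hexp, htwo_pow k, htwo_pow t, ← exp_add, ← exp_add, ← exp_log hδ, exp_le_exp]
  nlinarith [mul_le_mul_of_nonneg_right ht hlog2.le]

section CNN

variable {n k q : ℕ}

def window (x : Fin n → ℝ) (j : Fin (n - k)) : Fin k → ℝ :=
  fun l => x ⟨j.1 + l.1, by have := j.2; have := l.2; omega⟩

noncomputable def cnn (s : Fin q → Fin k → Bool) (u : Fin (n - k) → Fin q → ℝ)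
    (x : Fin n → ℝ) : ℝ :=
  ∑ j, ∑ i, u j i * neuron (s i) (window x j)

noncomputable def readout (g : (Fin k → ℝ) → ℝ) (s : Fin q → Fin k → Bool)
    (j' : Fin (n - k)) : Fin (n - k) → Fin q → ℝ :=
  fun j i => if j = j' then k * g (signVec (s i)) / occurrences s (s i) else 0

lemma cnn_readout (hk : 0 < k) (g : (Fin k → ℝ) → ℝ) (s : Fin q → Fin k → Bool)
    (hs : ∀ p, 0 < occurrences s p) (j' : Fin (n - k)) (x : Fin n → ℝ)
    (hx : ∀ i, x i = 1 ∨ x i = -1) :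
    cnn s (readout g s j') x = g (window x j') := by
  obtain ⟨p, hp⟩ := exists_signVec_eq (z := window x j') fun l => hx _
  have hNp : (occurrences s p : ℝ) ≠ 0 := by exact_mod_cast (hs p).ne'
  have hunit : ∀ i, readout g s j' j' i * neuron (s i) (window x j')
      = if s i = p then g (signVec p) / occurrences s p else 0 := by
    intro i
    rw [← hp, neuron_signVec hk]
    split_ifs with h
    · simp only [readout, ↓reduceIte, h]; field_simp
    · rw [mul_zero]
  rw [cnn, sum_eq_single j' (fun j _ hj => by simp [readout, hj]) (by simp),
    sum_congr rfl fun i _ => hunit i, sum_ite, sum_const_zero, add_zero, sum_const,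
    nsmul_eq_mul, ← hp]
  change (occurrences s p : ℝ) * _ = _
  field_simp

lemma sqrt_sum_readout_sq_le (g : (Fin k → ℝ) → ℝ)
    (hg : ∀ z : Fin k → ℝ, (∀ l, z l = 1 ∨ z l = -1) → g z = 1 ∨ g z = -1)
    (s : Fin q → Fin k → Bool) {t : ℕ} (hq0 : 0 < q)
    (hs : ∀ p, t ≤ occurrences s p) (htq : q ≤ t * 2 ^ (k + 2)) (j' : Fin (n - k)) :
    Real.sqrt (∑ i, readout g s j' j' i ^ 2) ≤ 2 ^ (k + 1) * k / Real.sqrt q := by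
  have hq : (0 : ℝ) < q := by exact_mod_cast hq0
  have ht : (0 : ℝ) < t := by
    exact_mod_cast Nat.pos_of_mul_pos_right (hq0.trans_le htq)
  have hsq : ∀ i, readout g s j' j' i ^ 2 = k ^ 2 * ((occurrences s (s i) : ℝ) ^ 2)⁻¹ := by
    intro i
    have : g (signVec (s i)) ^ 2 = 1 := by
      rcases hg (signVec (s i)) fun l => by by_cases h : s i l <;> simp [signVec, h] with
        h | h <;> simp [h]
    simp only [readout, ↓reduceIte]
    rw [div_pow, mul_pow, this, mul_one, div_eq_mul_inv]
  have hsum : ∑ p : Fin k → Bool, (occurrences s p : ℝ)⁻¹ ≤ 2 ^ k / t := by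
    calc ∑ p : Fin k → Bool, (occurrences s p : ℝ)⁻¹
        ≤ ∑ _p : Fin k → Bool, (t : ℝ)⁻¹ :=
          sum_le_sum fun p _ => inv_anti₀ ht (by exact_mod_cast hs p)
      _ = 2 ^ k / t := by simp [div_eq_mul_inv]
  rw [sum_congr rfl fun i _ => hsq i, ← mul_sum, sum_inv_occurrences_sq,
    le_div_iff₀ (Real.sqrt_pos.2 hq), ← Real.sqrt_mul (by positivity)]
  apply Real.sqrt_le_iff.2 ⟨by positivity, ?_⟩
  calc (k : ℝ) ^ 2 * (∑ p : Fin k → Bool, (occurrences s p : ℝ)⁻¹) * (q : ℝ)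
      ≤ k ^ 2 * (2 ^ k / t) * (t * 2 ^ (k + 2) : ℕ) := by
        gcongr
    _ = ((2 : ℝ) ^ (k + 1) * k) ^ 2 := by push_cast; field_simp; ring

end CNN

open Classical in
/-- With probability ≥ 1-δ over a uniform initialization `W ∈ {±1/k}^{q×k}` (encoded by
sign patterns `s : Fin q → Fin k → Bool`, with `W i l = 1/k` if `s i l` else `-1/k`),
when `q > 2^{k+3} log(2^k/δ)`: for every k-pattern `f(x) = g(x_{j'...j'+k})` there are
readout vectors `u^{(1)},...,u^{(n-k)} ∈ ℝ^q` with `‖u^{(j')}‖ ≤ 2^{k+1} k / √q` and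
`u^{(j)} = 0` for `j ≠ j'`, such that the depth-2 ReLU CNN with biases `b_i = 1/k - 1`
computes `f` exactly on `{±1}^n`. -/
theorem stmt_4 (n k q : ℕ) (hk : 0 < k) (hq0 : 0 < q)
    (δ : ℝ) (hδ : 0 < δ) (hδ1 : δ < 1)
    (hq : (q : ℝ) > 2 ^ (k + 3) * Real.log (2 ^ k / δ)) :
    (1 : ℝ) - δ ≤
      ((Finset.univ.filter (fun s : Fin q → Fin k → Bool =>
          ∀ (g : (Fin k → ℝ) → ℝ) (j' : Fin (n - k)),
            (∀ z : Fin k → ℝ, (∀ l, z l = 1 ∨ z l = -1) → g z = 1 ∨ g z = -1) →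
            ∃ u : Fin (n - k) → Fin q → ℝ,
              Real.sqrt (∑ i, (u j' i) ^ 2) ≤ 2 ^ (k + 1) * k / Real.sqrt q ∧
              (∀ j, j ≠ j' → u j = 0) ∧
              ∀ x : Fin n → ℝ, (∀ i, x i = 1 ∨ x i = -1) →
                (∑ j : Fin (n - k), ∑ i : Fin q, u j i *
                    max (∑ l : Fin k,
                        (if s i l then ((1 : ℝ) / k) else -(1 / k)) *
                          x ⟨j.1 + l.1, by have := j.2; have := l.2; omega⟩
                      + (1 / k - 1)) 0) =
                  g (fun l => x ⟨j'.1 + l.1, by have := j'.2; have := l.2; omega⟩))).card : ℝ)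
        / (Fintype.card (Fin q → Fin k → Bool) : ℝ) := by
  set t := q / 2 ^ (k + 2) + 1
  have htq : q ≤ t * 2 ^ (k + 2) := by
    rw [add_mul, one_mul]; exact (Nat.lt_div_mul_add (a := q) (by positivity)).le
  set Good := univ.filter fun s : Fin q → Fin k → Bool => ∀ p, t ≤ occurrences s p
  have hcard : (Fintype.card (Fin q → Fin k → Bool) : ℝ)
      = (Fintype.card (Fin k → Bool) : ℝ) ^ q := by simp
  rw [hcard]
  refine le_trans ?_ (div_le_div_of_nonneg_right (Nat.cast_le.2 (card_le_card (s := Good) ?_))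
    (by positivity))
  · calc 1 - δ ≤ 1 - 2 ^ k * 2 ^ t * exp (-(q / (2 * 2 ^ k))) := by
          linarith [two_pow_mul_two_pow_mul_exp_le hk hδ hδ1 hq]
      _ = 1 - Fintype.card (Fin k → Bool) * 2 ^ t
            * exp (-(q / (2 * Fintype.card (Fin k → Bool)))) := by simp
      _ ≤ _ := one_sub_le_card_filter_forall_le_occurrences_div q t
  · intro s hs
    have hs := (mem_filter.1 hs).2
    have hocc : ∀ p, 0 < occurrences s p := fun p =>
      (Nat.pos_of_mul_pos_right (hq0.trans_le htq)).trans_le (hs p)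
    exact mem_filter.2 ⟨mem_univ _, fun g j' hg => ⟨readout g s j',
      sqrt_sum_readout_sq_le g hg s hq0 hs htq j', fun j hj => funext fun _ => if_neg hj,
      fun x hx => cnn_readout hk g s hocc j' x hx⟩⟩
end

section
/- Online gradient descent regret bound: let f_1,...,f_T : R^d → R be convex differentiable functions, fix η > 0 and θ_1 ∈ R^d, and set θ_{t+1} = θ_t − η∇f_t(θ_t). Then for every θ* ∈ R^d: (1/T)Σ_t f_t(θ_t) ≤ (1/T)Σ_t f_t(θ*) + ‖θ*‖²/(2ηT) + ‖θ_1‖·(1/T)Σ_t ‖∇f_t(θ_t)‖ + η·(1/T)Σ_t ‖∇f_t(θ_t)‖². -/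
/-!
Each convex loss lies above its tangent plane at the iterate, so the regret against `θ*` is
bounded by the linearized regret `∑ ⟪∇f_t(θ_t), θ_t - θ*⟫`. One gradient step turns the pairing
`⟪g, θ - u⟫` into a difference of squared distances to `u` plus `η/2 ‖g‖²`, and these
differences telescope. Comparing with `u = θ* + θ_1` (`θ 0` in the code, which indexes rounds
from `0`) makes the telescoped distance `‖θ*‖`, and the shift by `θ_1` costs at most
`‖θ_1‖ ‖∇f_t(θ_t)‖` per round by Cauchy–Schwarz.
-/

open Finset
open scoped InnerProductSpace

theorem ConvexOn.add_fderiv_sub_le {E : Type*} [NormedAddCommGroup E] [NormedSpace ℝ E]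
    {s : Set E} {f : E → ℝ} {f' : StrongDual ℝ E} {x y : E} (hf : ConvexOn ℝ s f)
    (hx : x ∈ s) (hy : y ∈ s) (hf' : HasFDerivAt f f' x) :
    f x + f' (y - x) ≤ f y := by
  set L : ℝ →ᵃ[ℝ] E := AffineMap.lineMap x y
  have hline : ConvexOn ℝ (L ⁻¹' s) (f ∘ L) := hf.comp_affineMap L
  have hderiv : HasDerivAt (f ∘ L) (f' (y - x)) 0 :=
    (by simpa [L] using hf' : HasFDerivAt f f' (L 0)).comp_hasDerivAt
      _ AffineMap.hasDerivAt_lineMap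
  have hslope := hline.le_slope_of_hasDerivAt (by simpa [L]) (by simpa [L]) zero_lt_one hderiv
  simp only [L, slope_def_field, Function.comp_apply, AffineMap.lineMap_apply_zero,
    AffineMap.lineMap_apply_one, sub_zero, div_one] at hslope
  linarith

theorem ConvexOn.add_inner_gradient_sub_le {E : Type*} [NormedAddCommGroup E]
    [InnerProductSpace ℝ E] [CompleteSpace E] {s : Set E} {f : E → ℝ} {x y : E}
    (hf : ConvexOn ℝ s f) (hx : x ∈ s) (hy : y ∈ s) (hd : DifferentiableAt ℝ f x) :
    f x + ⟪gradient f x, y - x⟫_ℝ ≤ f y :=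
  hf.add_fderiv_sub_le hx hy hd.hasGradientAt.hasFDerivAt

section GradientStep

variable {E : Type*} [NormedAddCommGroup E] [InnerProductSpace ℝ E]

theorem inner_sub_eq_of_gradient_step {η : ℝ} (hη : η ≠ 0) (x g u : E) :
    ⟪g, x - u⟫_ℝ = (‖x - u‖ ^ 2 - ‖x - η • g - u‖ ^ 2) / (2 * η) + η / 2 * ‖g‖ ^ 2 := by
  rw [sub_right_comm, norm_sub_sq_real (x - u), real_inner_smul_right, norm_smul, mul_pow,
    Real.norm_eq_abs, sq_abs, real_inner_comm]
  field_simp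
  ring

variable {η : ℝ} {θ g : ℕ → E}

theorem sum_inner_sub_le_of_gradient_step (hη : 0 < η) (hθ : ∀ t, θ (t + 1) = θ t - η • g t)
    (u : E) (T : ℕ) :
    ∑ t ∈ range T, ⟪g t, θ t - u⟫_ℝ ≤
      ‖θ 0 - u‖ ^ 2 / (2 * η) + η / 2 * ∑ t ∈ range T, ‖g t‖ ^ 2 := by
  have htelescope : ∑ t ∈ range T, (‖θ t - u‖ ^ 2 - ‖θ (t + 1) - u‖ ^ 2)
      = ‖θ 0 - u‖ ^ 2 - ‖θ T - u‖ ^ 2 :=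
    sum_range_sub' (fun t => ‖θ t - u‖ ^ 2) T
  calc ∑ t ∈ range T, ⟪g t, θ t - u⟫_ℝ
      = (‖θ 0 - u‖ ^ 2 - ‖θ T - u‖ ^ 2) / (2 * η) + η / 2 * ∑ t ∈ range T, ‖g t‖ ^ 2 := by
        simp only [inner_sub_eq_of_gradient_step hη.ne', ← hθ, sum_add_distrib, ← sum_div,
          ← mul_sum, htelescope]
    _ ≤ ‖θ 0 - u‖ ^ 2 / (2 * η) + η / 2 * ∑ t ∈ range T, ‖g t‖ ^ 2 := by
        gcongr
        exact sub_le_self _ (sq_nonneg _)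

theorem sum_inner_sub_le_of_gradient_step' (hη : 0 < η)
    (hθ : ∀ t, θ (t + 1) = θ t - η • g t) (u : E) (T : ℕ) :
    ∑ t ∈ range T, ⟪g t, θ t - u⟫_ℝ ≤
      ‖u‖ ^ 2 / (2 * η) + ‖θ 0‖ * ∑ t ∈ range T, ‖g t‖
        + η / 2 * ∑ t ∈ range T, ‖g t‖ ^ 2 := by
  have hshift : ∀ t, ⟪g t, θ t - u⟫_ℝ ≤ ⟪g t, θ t - (u + θ 0)⟫_ℝ + ‖θ 0‖ * ‖g t‖ := fun t => by
    rw [show θ t - u = θ t - (u + θ 0) + θ 0 by abel, inner_add_right, mul_comm]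
    gcongr
    exact real_inner_le_norm _ _
  have hlinear := sum_inner_sub_le_of_gradient_step hη hθ (u + θ 0) T
  rw [show θ 0 - (u + θ 0) = -u by abel, norm_neg] at hlinear
  calc ∑ t ∈ range T, ⟪g t, θ t - u⟫_ℝ
      ≤ ∑ t ∈ range T, ⟪g t, θ t - (u + θ 0)⟫_ℝ + ‖θ 0‖ * ∑ t ∈ range T, ‖g t‖ := by
        rw [mul_sum, ← sum_add_distrib]
        exact sum_le_sum fun t _ => hshift t
    _ ≤ _ := by linarith

end GradientStep

theorem sum_le_sum_add_of_gradient_descent {E : Type*} [NormedAddCommGroup E]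
    [InnerProductSpace ℝ E] [CompleteSpace E] {η : ℝ} (hη : 0 < η) {f : ℕ → E → ℝ}
    (hconv : ∀ t, ConvexOn ℝ Set.univ (f t)) {θ : ℕ → E}
    (hdiff : ∀ t, DifferentiableAt ℝ (f t) (θ t))
    (hθ : ∀ t, θ (t + 1) = θ t - η • gradient (f t) (θ t)) (u : E) (T : ℕ) :
    ∑ t ∈ range T, f t (θ t) ≤
      ∑ t ∈ range T, f t u + ‖u‖ ^ 2 / (2 * η)
        + ‖θ 0‖ * ∑ t ∈ range T, ‖gradient (f t) (θ t)‖
        + η / 2 * ∑ t ∈ range T, ‖gradient (f t) (θ t)‖ ^ 2 := by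
  have htangent : ∀ t, f t (θ t) ≤ f t u + ⟪gradient (f t) (θ t), θ t - u⟫_ℝ := fun t => by
    have := (hconv t).add_inner_gradient_sub_le (Set.mem_univ _) (Set.mem_univ u) (hdiff t)
    rw [← neg_sub, inner_neg_right] at this
    linarith
  have hlinear := sum_inner_sub_le_of_gradient_step' hη hθ u T
  calc ∑ t ∈ range T, f t (θ t)
      ≤ ∑ t ∈ range T, f t u + ∑ t ∈ range T, ⟪gradient (f t) (θ t), θ t - u⟫_ℝ := by
        rw [← sum_add_distrib]
        exact sum_le_sum fun t _ => htangent t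
    _ ≤ _ := by linarith

theorem stmt_5_general (d T : ℕ) (η : ℝ) (hη : 0 < η)
    (f : ℕ → EuclideanSpace ℝ (Fin d) → ℝ)
    (hconv : ∀ t, ConvexOn ℝ Set.univ (f t))
    (hdiff : ∀ t, Differentiable ℝ (f t))
    (θ : ℕ → EuclideanSpace ℝ (Fin d))
    (hupd : ∀ t, θ (t + 1) = θ t - η • gradient (f t) (θ t))
    (θs : EuclideanSpace ℝ (Fin d)) :
    (1 / T : ℝ) * ∑ t ∈ Finset.range T, f t (θ t) ≤
      (1 / T : ℝ) * ∑ t ∈ Finset.range T, f t θs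
      + ‖θs‖ ^ 2 / (2 * η * T)
      + ‖θ 0‖ * ((1 / T : ℝ) * ∑ t ∈ Finset.range T, ‖gradient (f t) (θ t)‖)
      + η * ((1 / T : ℝ) * ∑ t ∈ Finset.range T, ‖gradient (f t) (θ t)‖ ^ 2) := by
  have hregret := sum_le_sum_add_of_gradient_descent hη hconv
    (fun t => (hdiff t).differentiableAt) hupd θs T
  have hhalf : η / 2 * ∑ t ∈ range T, ‖gradient (f t) (θ t)‖ ^ 2
      ≤ η * ∑ t ∈ range T, ‖gradient (f t) (θ t)‖ ^ 2 := by
    gcongr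
    linarith
  calc (1 / T : ℝ) * ∑ t ∈ range T, f t (θ t)
      ≤ (1 / T : ℝ) * (∑ t ∈ range T, f t θs + ‖θs‖ ^ 2 / (2 * η)
          + ‖θ 0‖ * ∑ t ∈ range T, ‖gradient (f t) (θ t)‖
          + η * ∑ t ∈ range T, ‖gradient (f t) (θ t)‖ ^ 2) := by
        gcongr
        linarith
    _ = _ := by ring

/-- Online gradient descent regret bound: for convex differentiable `f_1, ..., f_T`,
step size `η > 0`, and iterates `θ_{t+1} = θ_t - η ∇f_t(θ_t)`, for every `θ*`:
`(1/T) ∑ f_t(θ_t) ≤ (1/T) ∑ f_t(θ*) + ‖θ*‖²/(2ηT) + ‖θ_1‖ (1/T) ∑ ‖∇f_t(θ_t)‖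
  + η (1/T) ∑ ‖∇f_t(θ_t)‖²`. -/
theorem stmt_5 (d T : ℕ) (hT : 0 < T) (η : ℝ) (hη : 0 < η)
    (f : ℕ → EuclideanSpace ℝ (Fin d) → ℝ)
    (hconv : ∀ t, ConvexOn ℝ Set.univ (f t))
    (hdiff : ∀ t, Differentiable ℝ (f t))
    (θ : ℕ → EuclideanSpace ℝ (Fin d))
    (hupd : ∀ t, θ (t + 1) = θ t - η • gradient (f t) (θ t))
    (θs : EuclideanSpace ℝ (Fin d)) :
    (1 / T : ℝ) * ∑ t ∈ Finset.range T, f t (θ t) ≤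
      (1 / T : ℝ) * ∑ t ∈ Finset.range T, f t θs
      + ‖θs‖ ^ 2 / (2 * η * T)
      + ‖θ 0‖ * ((1 / T : ℝ) * ∑ t ∈ Finset.range T, ‖gradient (f t) (θ t)‖)
      + η * ((1 / T : ℝ) * ∑ t ∈ Finset.range T, ‖gradient (f t) (θ t)‖ ^ 2) :=
  stmt_5_general d T η hη f hconv hdiff θ hupd θs
end

section
/- Let h_{u,w,b}(x) = Σ_{i=1}^q u_i σ(⟨w^{(i)},x⟩ + b_i) be a one-hidden-layer fully-connected network with |σ'| ≤ 1, |u_i| ≤ 1, and h(x) ∈ [−1,1] for all x ∈ {±1}^n. Let D be uniform on {±1}^n, f = χ_I a parity on k coordinates, and let W be a permutation-invariant distribution over R^n from which w^{(1)},...,w^{(q)} are drawn. Then E_{w∼W} ‖∂/∂W L_{f,D}(h_{u,w,b})‖² ≤ qn · min{C(n−1,k)^{-1}, C(n−1,k−1)^{-1}}, where L_{f,D} is the population hinge loss and ∂/∂W denotes the gradient with respect to all first-layer weights. -/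
/-!
Row `i` of the first-layer gradient is the vector of Walsh–Fourier coefficients `ĝ(I ∆ {j})`,
`j = 1, …, n`, of the function `g(x) = u_i σ'(⟨w⁽ⁱ⁾, x⟩ + b_i)`, which is bounded by `1`.
Since the law of `w⁽ⁱ⁾` is permutation invariant, `E ĝ(K)²` only depends on `|K|`; call it
`a_{|K|}`. Row `i` then contributes `k a_{k-1} + (n - k) a_{k+1}`, while Parseval gives
`C(n, k-1) a_{k-1} + C(n, k+1) a_{k+1} ≤ E ∑_K ĝ(K)² ≤ 1`, and two binomial identities
turn the second bound into the first.
-/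

open Finset MeasureTheory
open scoped Pointwise symmDiff

lemma Finset.card_symmDiff_singleton {ι : Type*} [DecidableEq ι] (I : Finset ι) (j : ι) :
    (I ∆ {j}).card = if j ∈ I then I.card - 1 else I.card + 1 := by
  split_ifs with h
  · rw [show I ∆ {j} = I.erase j by ext; simp [mem_symmDiff]; grind, card_erase_of_mem h]
  · rw [show I ∆ {j} = insert j I by ext; simp [mem_symmDiff]; grind, card_insert_of_notMem h]

lemma Nat.mul_choose_le_mul_choose_adjacent {n k : ℕ} (hk0 : 0 < k) (hkn : k < n) {d : ℕ}
    (hd : d = (n - 1).choose k ∨ d = (n - 1).choose (k - 1)) :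
    k * d ≤ n * n.choose (k - 1) ∧ (n - k) * d ≤ n * n.choose (k + 1) := by
  obtain ⟨k, rfl⟩ : ∃ k', k = k' + 1 := ⟨k - 1, by omega⟩
  obtain ⟨m, rfl⟩ : ∃ m, n = m + 1 := ⟨n - 1, by omega⟩
  simp only [Nat.add_sub_cancel] at hd ⊢
  have hswap : m.choose (k + 1) * (k + 1) = m.choose k * (m - k) := Nat.choose_succ_right_eq m k
  have hlow : m.choose k ≤ (m + 1).choose k := Nat.choose_le_choose k (by omega)
  have hhigh : m.choose (k + 1) ≤ (m + 1).choose (k + 1 + 1) := by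
    rw [Nat.choose_succ_succ]; exact Nat.le_add_right _ _
  rcases hd with rfl | rfl
  · constructor
    · calc (k + 1) * m.choose (k + 1) = m.choose k * (m - k) := by rw [mul_comm, hswap]
        _ ≤ (m + 1).choose k * (m + 1) := Nat.mul_le_mul hlow (by omega)
        _ = _ := mul_comm _ _
    · exact Nat.mul_le_mul (by omega) hhigh
  · constructor
    · exact Nat.mul_le_mul (by omega) hlow
    · calc (m + 1 - (k + 1)) * m.choose k = m.choose (k + 1) * (k + 1) := by
            rw [hswap, mul_comm]; congr 1; omega
        _ ≤ (m + 1).choose (k + 1 + 1) * (m + 1) := Nat.mul_le_mul hhigh (by omega)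
        _ = _ := mul_comm _ _

lemma mul_add_mul_le_of_choose {n k : ℕ} (hk0 : 0 < k) (hkn : k < n) {a a' : ℝ}
    (ha : 0 ≤ a) (ha' : 0 ≤ a')
    (h : n.choose (k - 1) * a + n.choose (k + 1) * a' ≤ 1) :
    k * a + ((n - k : ℕ) : ℝ) * a' ≤
      n * min (((n - 1).choose k : ℝ))⁻¹ (((n - 1).choose (k - 1) : ℝ))⁻¹ := by
  have hbound : ∀ d : ℕ, d = (n - 1).choose k ∨ d = (n - 1).choose (k - 1) →
      k * a + ((n - k : ℕ) : ℝ) * a' ≤ n / d := by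
    intro d hd
    have hd0 : (0 : ℝ) < d := by
      rcases hd with rfl | rfl <;> exact_mod_cast Nat.choose_pos (by omega)
    obtain ⟨h₁, h₂⟩ := Nat.mul_choose_le_mul_choose_adjacent hk0 hkn hd
    have h₁' : (k : ℝ) * d ≤ n * n.choose (k - 1) := by exact_mod_cast h₁
    have h₂' : ((n - k : ℕ) : ℝ) * d ≤ n * n.choose (k + 1) := by exact_mod_cast h₂
    rw [le_div_iff₀ hd0]
    nlinarith [mul_le_mul_of_nonneg_right h₁' ha, mul_le_mul_of_nonneg_right h₂' ha',
      mul_le_mul_of_nonneg_left h (Nat.cast_nonneg n)]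
  rw [mul_min_of_nonneg _ _ (Nat.cast_nonneg n), ← div_eq_mul_inv, ← div_eq_mul_inv]
  exact le_min (hbound _ (.inl rfl)) (hbound _ (.inr rfl))

lemma Finset.exists_perm_smul_eq {ι : Type*} [DecidableEq ι] {K K' : Finset ι}
    (h : K.card = K'.card) : ∃ π : Equiv.Perm ι, π • K = K' := by
  have := Set.powersetCard.isPretransitive (α := ι) (n := K'.card)
  obtain ⟨π, hπ⟩ := MulAction.exists_smul_eq (Equiv.Perm ι)
    (⟨K, h⟩ : Set.powersetCard ι K'.card) ⟨K', rfl⟩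
  exact ⟨π, congrArg Subtype.val hπ⟩

lemma integral_comp_perm_of_map_eq {ι : Type*} {μ : Measure (ι → ℝ)}
    (hμ : ∀ π : Equiv.Perm ι, μ.map (fun w => w ∘ π) = μ) (π : Equiv.Perm ι)
    (F : (ι → ℝ) → ℝ) : ∫ w, F (w ∘ π) ∂μ = ∫ w, F w ∂μ :=
  MeasurePreserving.integral_comp' (f := MeasurableEquiv.arrowCongr' π.symm (.refl ℝ))
    ⟨(MeasurableEquiv.arrowCongr' π.symm (.refl ℝ)).measurable, hμ π⟩ F

lemma integral_pi_sum_sum_comp_eval {ι κ X : Type*} [Fintype ι] [Fintype κ] [MeasurableSpace X]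
    {μ : Measure X} [IsProbabilityMeasure μ] (f : ι → κ → X → ℝ)
    (hf : ∀ i j, Integrable (f i j) μ) :
    ∫ w, ∑ i, ∑ j, f i j (w i) ∂(Measure.pi fun _ => μ) = ∑ i, ∑ j, ∫ v, f i j v ∂μ := by
  have hf' : ∀ i j, Integrable (fun w : ι → X => f i j (w i)) (Measure.pi fun _ => μ) :=
    fun i j => integrable_comp_eval (hf i j)
  rw [integral_finsetSum _ fun i _ => integrable_finsetSum _ fun j _ => hf' i j]
  refine sum_congr rfl fun i _ => ?_
  rw [integral_finsetSum _ fun j _ => hf' i j]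
  exact sum_congr rfl fun j _ => integral_comp_eval (hf i j).aestronglyMeasurable

lemma sum_symmDiff_singleton_le_of_card_invariant {ι : Type*} [Fintype ι] [DecidableEq ι]
    {F : Finset ι → ℝ} (hF0 : ∀ K, 0 ≤ F K) (hF : ∀ K K', K.card = K'.card → F K = F K')
    (hsum : ∑ K, F K ≤ 1) {n k : ℕ} (hn : Fintype.card ι = n) {I : Finset ι} (hI : I.card = k)
    (hk0 : 0 < k) (hkn : k < n) :
    ∑ j, F (I ∆ {j}) ≤ n * min (((n - 1).choose k : ℝ))⁻¹ (((n - 1).choose (k - 1) : ℝ))⁻¹ := by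
  set e : ℕ → ℝ := Function.extend card F 0
  have hE : ∀ K, F K = e K.card := fun K =>
    (Function.FactorsThrough.extend_apply (f := card) (fun K K' h => hF K K' h) 0 K).symm
  have he0 : ∀ m, 0 ≤ e m := by
    intro m
    by_cases h : ∃ K : Finset ι, K.card = m
    · obtain ⟨K, rfl⟩ := h
      exact hE K ▸ hF0 K
    · simp [e, Function.extend_apply' _ _ _ h]
  have hlevels : ∑ j, F (I ∆ {j}) = k * e (k - 1) + ((n - k : ℕ) : ℝ) * e (k + 1) := by
    simp only [hE, card_symmDiff_singleton, apply_ite e, sum_ite, sum_const]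
    simp [filter_notMem_eq_sdiff, card_sdiff, hI, hn]
  have hparseval : n.choose (k - 1) * e (k - 1) + n.choose (k + 1) * e (k + 1) ≤ 1 :=
    calc _ ≤ ∑ m ∈ range (n + 1), n.choose m • e m := by
          simp only [← nsmul_eq_mul]
          exact add_le_sum (fun m _ => nsmul_nonneg (he0 m) _) (by simp; omega)
            (by simp; omega) (by omega)
      _ = ∑ K, F K := by
          rw [← hn, ← card_univ, ← sum_powerset_apply_card, powerset_univ]
          simp only [hE]
      _ ≤ 1 := hsum
  rw [hlevels]
  exact mul_add_mul_le_of_choose hk0 hkn (he0 _) (he0 _) hparseval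

namespace BoolCube

section Fourier

variable {ι : Type*}

def sign (b : Bool) : ℝ := if b then 1 else -1

def walsh (K : Finset ι) (x : ι → Bool) : ℝ := ∏ l ∈ K, sign (x l)

noncomputable def fourierCoeff [Fintype ι] [DecidableEq ι] (g : (ι → Bool) → ℝ)
    (K : Finset ι) : ℝ :=
  ((2 : ℝ) ^ Fintype.card ι)⁻¹ * ∑ x, g x * walsh K x

lemma sign_mul_self (b : Bool) : sign b * sign b = 1 := by cases b <;> norm_num [sign]

lemma walsh_eq_prod_ite [Fintype ι] [DecidableEq ι] (K : Finset ι) (x : ι → Bool) :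
    walsh K x = ∏ l, if l ∈ K then sign (x l) else 1 := by
  rw [prod_ite_mem, univ_inter, walsh]

lemma walsh_symmDiff [Fintype ι] [DecidableEq ι] (s t : Finset ι) (x : ι → Bool) :
    walsh (s ∆ t) x = walsh s x * walsh t x := by
  simp only [walsh_eq_prod_ite, ← prod_mul_distrib]
  refine prod_congr rfl fun l _ => ?_
  by_cases hs : l ∈ s <;> by_cases ht : l ∈ t <;> simp [mem_symmDiff, hs, ht, sign_mul_self]

lemma sum_walsh_mul_walsh [Fintype ι] [DecidableEq ι] (x y : ι → Bool) :
    ∑ K, walsh K x * walsh K y = if x = y then (2 : ℝ) ^ Fintype.card ι else 0 := by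
  have hprod : ∑ K, walsh K x * walsh K y = ∏ l, (sign (x l) * sign (y l) + 1) := by
    simp [prod_add_one, walsh, prod_mul_distrib]
  rw [hprod]
  split_ifs with h
  · subst h
    simp [sign_mul_self, one_add_one_eq_two]
  · obtain ⟨l, hl⟩ := Function.ne_iff.mp h
    refine prod_eq_zero (mem_univ l) ?_
    cases hx : x l <;> cases hy : y l <;> simp_all [sign]

theorem sum_sq_fourierCoeff [Fintype ι] [DecidableEq ι] (g : (ι → Bool) → ℝ) :
    ∑ K, fourierCoeff g K ^ 2 = ((2 : ℝ) ^ Fintype.card ι)⁻¹ * ∑ x, g x ^ 2 := by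
  set N : ℝ := 2 ^ Fintype.card ι
  have hsq : ∀ K, fourierCoeff g K ^ 2 =
      N⁻¹ ^ 2 * ∑ x, ∑ y, g x * g y * (walsh K x * walsh K y) := fun K => by
    rw [fourierCoeff, mul_pow, sq (∑ x, _), sum_mul_sum]
    congr 1
    exact sum_congr rfl fun x _ => sum_congr rfl fun y _ => by ring
  calc ∑ K, fourierCoeff g K ^ 2
      = N⁻¹ ^ 2 * ∑ x, ∑ y, g x * g y * ∑ K, walsh K x * walsh K y := by
        simp only [hsq, ← mul_sum]
        rw [sum_comm]
        exact congrArg _ (sum_congr rfl fun x _ => by rw [sum_comm]; simp only [mul_sum])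
    _ = N⁻¹ * ∑ x, g x ^ 2 := by
        simp only [sum_walsh_mul_walsh, mul_ite, mul_zero, sum_ite_eq, mem_univ, if_true,
          ← sum_mul, ← sq]
        field_simp [N]
        ring

theorem sum_sq_fourierCoeff_le_one [Fintype ι] [DecidableEq ι] {g : (ι → Bool) → ℝ}
    (hg : ∀ x, |g x| ≤ 1) : ∑ K, fourierCoeff g K ^ 2 ≤ 1 := by
  rw [sum_sq_fourierCoeff, inv_mul_le_iff₀ (by positivity), mul_one]
  calc ∑ x, g x ^ 2 ≤ ∑ _x : ι → Bool, (1 : ℝ) :=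
        sum_le_sum fun x _ => sq_le_one_iff_abs_le_one _ |>.mpr (hg x)
    _ = 2 ^ Fintype.card ι := by simp

lemma sq_fourierCoeff_le_one [Fintype ι] [DecidableEq ι] {g : (ι → Bool) → ℝ}
    (hg : ∀ x, |g x| ≤ 1) (K : Finset ι) : fourierCoeff g K ^ 2 ≤ 1 :=
  (single_le_sum (fun K _ => sq_nonneg (fourierCoeff g K)) (mem_univ K)).trans
    (sum_sq_fourierCoeff_le_one hg)

lemma walsh_perm_smul [DecidableEq ι] (π : Equiv.Perm ι) (K : Finset ι) (x : ι → Bool) :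
    walsh (π • K) x = walsh K (x ∘ π) := by
  rw [walsh, smul_finset_def, prod_image (MulAction.injective π).injOn]
  rfl

lemma fourierCoeff_comp_perm [Fintype ι] [DecidableEq ι] (g : (ι → Bool) → ℝ)
    (π : Equiv.Perm ι) (K : Finset ι) :
    fourierCoeff (fun x => g (x ∘ π)) (π • K) = fourierCoeff g K := by
  simp only [fourierCoeff, walsh_perm_smul]
  congr 1
  exact Equiv.sum_comp (π.symm.arrowCongr (Equiv.refl Bool)) (fun y => g y * walsh K y)

end Fourier

section Neuron

variable {ι : Type*} [Fintype ι]

def neuron (φ : ℝ → ℝ) (c β : ℝ) (w : ι → ℝ) (x : ι → Bool) : ℝ :=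
  c * φ (∑ l, w l * sign (x l) + β)

variable {φ : ℝ → ℝ} {c β : ℝ}

lemma neuron_comp_perm_symm (π : Equiv.Perm ι) (w : ι → ℝ) (x : ι → Bool) :
    neuron φ c β (w ∘ π.symm) x = neuron φ c β w (x ∘ π) := by
  simp only [neuron, Function.comp_apply]
  congr 3
  exact (Equiv.sum_comp π _).symm.trans (by simp)

lemma abs_neuron_le (hφ : ∀ t, |φ t| ≤ 1) (hc : |c| ≤ 1) (w : ι → ℝ) (x : ι → Bool) :
    |neuron φ c β w x| ≤ 1 := by
  rw [neuron, abs_mul]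
  exact mul_le_one₀ hc (abs_nonneg _) (hφ _)

variable [DecidableEq ι]

lemma fourierCoeff_neuron_comp_perm_symm (π : Equiv.Perm ι) (w : ι → ℝ) (K : Finset ι) :
    fourierCoeff (neuron φ c β (w ∘ π.symm)) (π • K) = fourierCoeff (neuron φ c β w) K := by
  simp only [funext (neuron_comp_perm_symm π w), fourierCoeff_comp_perm]

lemma measurable_fourierCoeff_neuron (hφ : Measurable φ) (K : Finset ι) :
    Measurable fun w => fourierCoeff (neuron φ c β w) K := by
  unfold fourierCoeff neuron
  fun_prop

lemma fourierCoeff_neuron_symmDiff_singleton (w : ι → ℝ) (I : Finset ι) (j : ι) :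
    fourierCoeff (neuron φ c β w) (I ∆ {j}) = ((2 : ℝ) ^ Fintype.card ι)⁻¹ *
      ∑ x, sign (x j) * c * φ (∑ l, w l * sign (x l) + β) * walsh I x := by
  simp only [fourierCoeff, neuron, walsh_symmDiff]
  congr 1
  exact sum_congr rfl fun x _ => by
    rw [show walsh {j} x = sign (x j) from prod_singleton _ _]; ring

lemma integrable_sq_fourierCoeff_neuron {μ : Measure (ι → ℝ)} [IsFiniteMeasure μ]
    (hφm : Measurable φ) (hφ : ∀ t, |φ t| ≤ 1) (hc : |c| ≤ 1) (K : Finset ι) :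
    Integrable (fun w => fourierCoeff (neuron φ c β w) K ^ 2) μ :=
  .of_bound ((measurable_fourierCoeff_neuron hφm K).pow_const 2).aestronglyMeasurable 1
    (ae_of_all _ fun w => by
      rw [Real.norm_of_nonneg (sq_nonneg _)]
      exact sq_fourierCoeff_le_one (abs_neuron_le hφ hc w) K)

lemma integral_sq_fourierCoeff_neuron_eq_of_card_eq {μ : Measure (ι → ℝ)}
    (hμ : ∀ π : Equiv.Perm ι, μ.map (fun w => w ∘ π) = μ) {K K' : Finset ι}
    (h : K.card = K'.card) :
    ∫ w, fourierCoeff (neuron φ c β w) K ^ 2 ∂μ =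
      ∫ w, fourierCoeff (neuron φ c β w) K' ^ 2 ∂μ := by
  obtain ⟨π, rfl⟩ := Finset.exists_perm_smul_eq h
  calc ∫ w, fourierCoeff (neuron φ c β w) K ^ 2 ∂μ
      = ∫ w, fourierCoeff (neuron φ c β (w ∘ π.symm)) (π • K) ^ 2 ∂μ := by
        simp only [fourierCoeff_neuron_comp_perm_symm]
    _ = _ := integral_comp_perm_of_map_eq hμ π.symm
        (fun w => fourierCoeff (neuron φ c β w) (π • K) ^ 2)

theorem sum_integral_sq_fourierCoeff_neuron_symmDiff_le {μ : Measure (ι → ℝ)}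
    [IsProbabilityMeasure μ] (hμ : ∀ π : Equiv.Perm ι, μ.map (fun w => w ∘ π) = μ)
    (hφm : Measurable φ) (hφ : ∀ t, |φ t| ≤ 1) (hc : |c| ≤ 1) {n k : ℕ}
    (hn : Fintype.card ι = n) {I : Finset ι} (hI : I.card = k) (hk0 : 0 < k) (hkn : k < n) :
    ∑ j, ∫ w, fourierCoeff (neuron φ c β w) (I ∆ {j}) ^ 2 ∂μ ≤
      n * min (((n - 1).choose k : ℝ))⁻¹ (((n - 1).choose (k - 1) : ℝ))⁻¹ := by
  have hint := integrable_sq_fourierCoeff_neuron (μ := μ) (β := β) hφm hφ hc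
  refine sum_symmDiff_singleton_le_of_card_invariant
    (fun K => integral_nonneg fun _ => sq_nonneg _)
    (fun K K' h => integral_sq_fourierCoeff_neuron_eq_of_card_eq hμ h) ?_ hn hI hk0 hkn
  calc ∑ K, ∫ w, fourierCoeff (neuron φ c β w) K ^ 2 ∂μ
      = ∫ w, ∑ K, fourierCoeff (neuron φ c β w) K ^ 2 ∂μ :=
        (integral_finsetSum _ fun K _ => hint K).symm
    _ ≤ ∫ _, 1 ∂μ := integral_mono (integrable_finsetSum _ fun K _ => hint K)
        (integrable_const 1) fun w => sum_sq_fourierCoeff_le_one (abs_neuron_le hφ hc w)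
    _ = 1 := by simp

end Neuron

end BoolCube

open MeasureTheory in
theorem stmt_14_general (n k q : ℕ) (hk0 : 0 < k) (hkn : k < n)
    (I : Finset (Fin n)) (hI : I.card = k)
    (dσ : ℝ → ℝ) (hdσ : ∀ t, |dσ t| ≤ 1)
    (hmeas : Measurable dσ)
    (u : Fin q → ℝ) (hu : ∀ i, |u i| ≤ 1) (b : Fin q → ℝ)
    (μ : Measure (Fin n → ℝ)) [IsProbabilityMeasure μ]
    (hinv : ∀ π : Equiv.Perm (Fin n), μ.map (fun w => w ∘ π) = μ) :
    (∫ w : Fin q → Fin n → ℝ,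
        (∑ i : Fin q, ∑ j : Fin n,
          (((2 : ℝ) ^ n)⁻¹ * ∑ x : Fin n → Bool,
            (if x j then (1 : ℝ) else -1) * u i *
              dσ (∑ l : Fin n, w i l * (if x l then (1 : ℝ) else -1) + b i) *
              ∏ i' ∈ I, (if x i' then (1 : ℝ) else -1)) ^ 2)
        ∂(Measure.pi fun _ => μ))
      ≤ (q : ℝ) * n * min (((n - 1).choose k : ℝ))⁻¹ (((n - 1).choose (k - 1) : ℝ))⁻¹ := by
  calc _ = ∫ w : Fin q → Fin n → ℝ, ∑ i, ∑ j,
        BoolCube.fourierCoeff (BoolCube.neuron dσ (u i) (b i) (w i)) (I ∆ {j}) ^ 2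
          ∂(Measure.pi fun _ => μ) := by
        simp only [BoolCube.fourierCoeff_neuron_symmDiff_singleton, Fintype.card_fin]
        rfl
    _ = ∑ i, ∑ j, ∫ v,
          BoolCube.fourierCoeff (BoolCube.neuron dσ (u i) (b i) v) (I ∆ {j}) ^ 2 ∂μ :=
        integral_pi_sum_sum_comp_eval _ fun i _ =>
          BoolCube.integrable_sq_fourierCoeff_neuron hmeas hdσ (hu i) _
    _ ≤ ∑ _i : Fin q, n * min (((n - 1).choose k : ℝ))⁻¹ (((n - 1).choose (k - 1) : ℝ))⁻¹ :=
        sum_le_sum fun i _ => BoolCube.sum_integral_sq_fourierCoeff_neuron_symmDiff_le hinv hmeas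
          hdσ (hu i) (Fintype.card_fin n) hI hk0 hkn
    _ = _ := by simp [mul_assoc]

open MeasureTheory in
/-- FCN hardness, first-layer gradient. For a one-hidden-layer fully connected network
`h(x) = ∑_i u_i σ(⟨w^{(i)}, x⟩ + b_i)` with `|σ'| ≤ 1`, `|u_i| ≤ 1` and `h(x) ∈ [-1,1]`,
uniform `D` on `{±1}^n` and target parity `f = χ_I` with `|I| = k`, if the rows
`w^{(1)}, ..., w^{(q)}` are drawn i.i.d. from a permutation-invariant distribution `μ` on
`ℝ^n`, then the expected squared norm of the gradient of the population hinge loss with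
respect to the first layer (whose `(i,j)` entry is
`-E_x[x_j u_i σ'(⟨w^{(i)},x⟩ + b_i) χ_I(x)]`) is at most
`q n · min{C(n-1,k)⁻¹, C(n-1,k-1)⁻¹}`. -/
theorem stmt_14 (n k q : ℕ) (hk0 : 0 < k) (hkn : k < n)
    (I : Finset (Fin n)) (hI : I.card = k)
    (σ dσ : ℝ → ℝ) (hderiv : ∀ t, HasDerivAt σ (dσ t) t) (hdσ : ∀ t, |dσ t| ≤ 1)
    (hmeas : Measurable dσ)
    (u : Fin q → ℝ) (hu : ∀ i, |u i| ≤ 1) (b : Fin q → ℝ)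
    (μ : Measure (Fin n → ℝ)) [IsProbabilityMeasure μ]
    (hinv : ∀ π : Equiv.Perm (Fin n), μ.map (fun w => w ∘ π) = μ)
    (hbound : ∀ᵐ w : Fin q → Fin n → ℝ ∂(Measure.pi fun _ => μ),
      ∀ x : Fin n → Bool,
        |∑ i : Fin q, u i *
          σ (∑ l : Fin n, w i l * (if x l then (1 : ℝ) else -1) + b i)| ≤ 1) :
    (∫ w : Fin q → Fin n → ℝ,
        (∑ i : Fin q, ∑ j : Fin n,
          (((2 : ℝ) ^ n)⁻¹ * ∑ x : Fin n → Bool,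
            (if x j then (1 : ℝ) else -1) * u i *
              dσ (∑ l : Fin n, w i l * (if x l then (1 : ℝ) else -1) + b i) *
              ∏ i' ∈ I, (if x i' then (1 : ℝ) else -1)) ^ 2)
        ∂(Measure.pi fun _ => μ))
      ≤ (q : ℝ) * n * min (((n - 1).choose k : ℝ))⁻¹ (((n - 1).choose (k - 1) : ℝ))⁻¹ :=
  stmt_14_general n k q hk0 hkn I hI dσ hdσ hmeas u hu b μ hinv
end

section
/- Under the same setting, additionally assuming |σ| ≤ c, the gradient with respect to the output layer satisfies E_{w∼W} ‖∂/∂u L_{f,D}(h_{u,w,b})‖² ≤ c² q · C(n,k)^{-1}. -/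
open MeasureTheory

noncomputable def sgn15 (t : Bool) : ℝ := if t then 1 else -1

lemma sgn15_sq (t : Bool) : sgn15 t * sgn15 t = 1 := by cases t <;> simp [sgn15]

lemma orth15 {n : ℕ} (x y : Fin n → Bool) :
    ∑ J : Finset (Fin n), (∏ i ∈ J, sgn15 (x i)) * (∏ i ∈ J, sgn15 (y i))
      = if x = y then (2:ℝ)^n else 0 := by
  have h1 : ∀ J : Finset (Fin n),
      (∏ i ∈ J, sgn15 (x i)) * (∏ i ∈ J, sgn15 (y i))
        = ∏ i ∈ J, (sgn15 (x i) * sgn15 (y i)) := fun J => (Finset.prod_mul_distrib).symm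
  simp_rw [h1]
  have h2 : (∑ J : Finset (Fin n), ∏ i ∈ J, (sgn15 (x i) * sgn15 (y i)))
      = ∏ i : Fin n, (sgn15 (x i) * sgn15 (y i) + 1) := by
    rw [Finset.prod_add]
    rw [← Finset.powerset_univ]
    exact (Finset.sum_congr rfl (fun t _ => by simp)).symm
  rw [h2]
  by_cases hxy : x = y
  · subst hxy
    simp only [if_pos rfl]
    have : ∀ i : Fin n, sgn15 (x i) * sgn15 (x i) + 1 = 2 := fun i => by
      rw [sgn15_sq]; norm_num
    simp_rw [this]
    simp
  · simp only [if_neg hxy]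
    obtain ⟨i, hi⟩ : ∃ i, x i ≠ y i := by
      by_contra h; push_neg at h; exact hxy (funext h)
    apply Finset.prod_eq_zero (Finset.mem_univ i)
    cases hx : x i <;> cases hy : y i <;> simp_all [sgn15]

lemma parseval15 {n : ℕ} (h : (Fin n → Bool) → ℝ) :
    ∑ J : Finset (Fin n),
        (((2:ℝ)^n)⁻¹ * ∑ x : Fin n → Bool, h x * ∏ i ∈ J, sgn15 (x i))^2
      = ((2:ℝ)^n)⁻¹ * ∑ x : Fin n → Bool, (h x)^2 := by
  set a : ℝ := (2:ℝ)^n with ha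
  have ha0 : a ≠ 0 := by positivity
  have key : ∀ J : Finset (Fin n),
      (a⁻¹ * ∑ x : Fin n → Bool, h x * ∏ i ∈ J, sgn15 (x i))^2
        = a⁻¹ * a⁻¹ * ((∑ x : Fin n → Bool, h x * ∏ i ∈ J, sgn15 (x i)) *
            (∑ y : Fin n → Bool, h y * ∏ i ∈ J, sgn15 (y i))) := fun J => by ring
  simp_rw [key, ← Finset.mul_sum]
  have main : (∑ J : Finset (Fin n),
      (∑ x : Fin n → Bool, h x * ∏ i ∈ J, sgn15 (x i)) *
        (∑ y : Fin n → Bool, h y * ∏ i ∈ J, sgn15 (y i)))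
      = ∑ x : Fin n → Bool, h x * h x * a := by
    have e1 : ∀ J : Finset (Fin n),
        (∑ x : Fin n → Bool, h x * ∏ i ∈ J, sgn15 (x i)) *
          (∑ y : Fin n → Bool, h y * ∏ i ∈ J, sgn15 (y i))
        = ∑ x : Fin n → Bool, ∑ y : Fin n → Bool,
            (h x * ∏ i ∈ J, sgn15 (x i)) * (h y * ∏ i ∈ J, sgn15 (y i)) := fun J =>
      Finset.sum_mul_sum _ _ _ _
    simp_rw [e1]
    rw [Finset.sum_comm]
    refine Finset.sum_congr rfl (fun x _ => ?_)
    rw [Finset.sum_comm]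
    have e2 : ∀ y : Fin n → Bool,
        (∑ J : Finset (Fin n),
          (h x * ∏ i ∈ J, sgn15 (x i)) * (h y * ∏ i ∈ J, sgn15 (y i)))
        = h x * h y * (if x = y then a else 0) := by
      intro y
      rw [← orth15 x y, Finset.mul_sum]
      refine Finset.sum_congr rfl (fun J _ => by ring)
    simp_rw [e2, mul_ite, mul_zero]
    rw [Finset.sum_ite_eq]
    simp
  rw [main]
  rw [Finset.mul_sum, Finset.mul_sum]
  refine Finset.sum_congr rfl (fun x _ => ?_)
  field_simp

noncomputable def coef15 {n : ℕ} (σ : ℝ → ℝ) (b : ℝ) (J : Finset (Fin n)) (w : Fin n → ℝ) : ℝ :=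
  ((2:ℝ)^n)⁻¹ * ∑ x : Fin n → Bool,
    σ (∑ l : Fin n, w l * sgn15 (x l) + b) * ∏ i ∈ J, sgn15 (x i)

lemma coef15_meas {n : ℕ} {σ : ℝ → ℝ} (hmeas : Measurable σ) (b : ℝ) (J : Finset (Fin n)) :
    Measurable (coef15 σ b J) := by
  apply Measurable.const_mul
  apply Finset.measurable_sum
  intro x _
  apply Measurable.mul_const
  apply hmeas.comp
  apply Measurable.add_const
  exact Finset.measurable_sum _ fun l _ => (measurable_pi_apply l).mul_const _

lemma coef15_abs_le {n : ℕ} {σ : ℝ → ℝ} {c : ℝ} (hσc : ∀ t, |σ t| ≤ c)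
    (b : ℝ) (J : Finset (Fin n)) (w : Fin n → ℝ) : |coef15 σ b J w| ≤ c := by
  have hcard : (Fintype.card (Fin n → Bool) : ℝ) = (2:ℝ)^n := by
    simp [Fintype.card_fun]
  have h1 : |∑ x : Fin n → Bool,
      σ (∑ l : Fin n, w l * sgn15 (x l) + b) * ∏ i ∈ J, sgn15 (x i)| ≤ (2:ℝ)^n * c := by
    calc _ ≤ ∑ x : Fin n → Bool,
        |σ (∑ l : Fin n, w l * sgn15 (x l) + b) * ∏ i ∈ J, sgn15 (x i)| :=
      Finset.abs_sum_le_sum_abs _ _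
    _ ≤ ∑ _x : Fin n → Bool, c := by
        refine Finset.sum_le_sum (fun x _ => ?_)
        rw [abs_mul]
        have hχ : |∏ i ∈ J, sgn15 (x i)| = 1 := by
          rw [Finset.abs_prod]
          refine Finset.prod_eq_one (fun i _ => ?_)
          cases x i <;> simp [sgn15]
        rw [hχ, mul_one]; exact hσc _
    _ = (2:ℝ)^n * c := by rw [Finset.sum_const, nsmul_eq_mul, Finset.card_univ, hcard]
  rw [coef15, abs_mul, abs_inv, abs_pow]
  simp only [abs_two]
  calc ((2:ℝ)^n)⁻¹ * |∑ x : Fin n → Bool,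
        σ (∑ l : Fin n, w l * sgn15 (x l) + b) * ∏ i ∈ J, sgn15 (x i)|
      ≤ ((2:ℝ)^n)⁻¹ * ((2:ℝ)^n * c) := by
        refine mul_le_mul_of_nonneg_left h1 (by positivity)
    _ = c := by field_simp

lemma coef15_sum_sq_le {n : ℕ} {σ : ℝ → ℝ} {c : ℝ} (hσc : ∀ t, |σ t| ≤ c)
    (b : ℝ) (w : Fin n → ℝ) :
    ∑ J : Finset (Fin n), (coef15 σ b J w)^2 ≤ c^2 := by
  have := parseval15 (fun x : Fin n → Bool => σ (∑ l : Fin n, w l * sgn15 (x l) + b))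
  simp only [coef15]
  rw [this]
  have hcard : (Fintype.card (Fin n → Bool) : ℝ) = (2:ℝ)^n := by
    simp [Fintype.card_fun]
  have h2 : ∑ x : Fin n → Bool, (σ (∑ l : Fin n, w l * sgn15 (x l) + b))^2
      ≤ (2:ℝ)^n * c^2 := by
    calc _ ≤ ∑ _x : Fin n → Bool, c^2 := by
          refine Finset.sum_le_sum (fun x _ => ?_)
          have h := hσc (∑ l : Fin n, w l * sgn15 (x l) + b)
          calc (σ (∑ l : Fin n, w l * sgn15 (x l) + b))^2
              = |σ (∑ l : Fin n, w l * sgn15 (x l) + b)|^2 := (sq_abs _).symm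
            _ ≤ c^2 := by
                have h0 : (0:ℝ) ≤ |σ (∑ l : Fin n, w l * sgn15 (x l) + b)| := abs_nonneg _
                nlinarith
      _ = (2:ℝ)^n * c^2 := by rw [Finset.sum_const, nsmul_eq_mul, Finset.card_univ, hcard]
  calc ((2:ℝ)^n)⁻¹ * ∑ x : Fin n → Bool, (σ (∑ l : Fin n, w l * sgn15 (x l) + b))^2
      ≤ ((2:ℝ)^n)⁻¹ * ((2:ℝ)^n * c^2) := mul_le_mul_of_nonneg_left h2 (by positivity)
    _ = c^2 := by field_simp

lemma coef15_perm {n : ℕ} (σ : ℝ → ℝ) (b : ℝ) (J : Finset (Fin n))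
    (π : Equiv.Perm (Fin n)) (w : Fin n → ℝ) :
    coef15 σ b J (w ∘ π) = coef15 σ b (J.image π) w := by
  unfold coef15
  congr 1
  apply Fintype.sum_bijective (fun x : Fin n → Bool => x ∘ π.symm)
    ((Equiv.arrowCongr π (Equiv.refl Bool)).bijective)
  intro x
  congr 1
  · congr 1
    congr 1
    apply Fintype.sum_bijective π π.bijective
    intro l
    simp
  · rw [Finset.prod_image (fun a _ b _ h => π.injective h)]
    refine Finset.prod_congr rfl (fun i _ => ?_)
    simp

lemma coef15_integrable {n : ℕ} {σ : ℝ → ℝ} {c : ℝ} (hmeas : Measurable σ)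
    (hσc : ∀ t, |σ t| ≤ c) (b : ℝ) (J : Finset (Fin n))
    (μ : Measure (Fin n → ℝ)) [IsProbabilityMeasure μ] :
    Integrable (fun w => (coef15 σ b J w)^2) μ := by
  refine (integrable_const (c^2)).mono'
    (((coef15_meas hmeas b J).pow_const 2).aestronglyMeasurable) (ae_of_all _ fun w => ?_)
  have h := coef15_abs_le hσc b J w
  have h0 : (0:ℝ) ≤ |coef15 σ b J w| := abs_nonneg _
  have : ‖(coef15 σ b J w)^2‖ = |coef15 σ b J w|^2 := by
    rw [Real.norm_eq_abs, sq_abs, ← sq_abs, abs_of_nonneg (sq_nonneg _)]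
  rw [this]
  nlinarith

lemma coef15_int_perm {n : ℕ} {σ : ℝ → ℝ} (hmeas : Measurable σ) (b : ℝ)
    (J : Finset (Fin n)) (π : Equiv.Perm (Fin n))
    (μ : Measure (Fin n → ℝ))
    (hinv : ∀ π : Equiv.Perm (Fin n), μ.map (fun w => w ∘ π) = μ) :
    ∫ w, (coef15 σ b (J.image π) w)^2 ∂μ = ∫ w, (coef15 σ b J w)^2 ∂μ := by
  have hg : Measurable (fun w : Fin n → ℝ => w ∘ π) :=
    measurable_pi_lambda _ (fun l => measurable_pi_apply (π l))
  have hg' : Measurable (fun w : Fin n → ℝ => w ∘ π.symm) :=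
    measurable_pi_lambda _ (fun l => measurable_pi_apply (π.symm l))
  conv_lhs => rw [← hinv π.symm]
  rw [integral_map hg'.aemeasurable
    (((coef15_meas hmeas b (J.image π)).pow_const 2).aestronglyMeasurable)]
  refine integral_congr_ae (ae_of_all _ fun w => ?_)
  have hkey := coef15_perm σ b J π (w ∘ π.symm)
  have hw : (w ∘ ⇑π.symm) ∘ ⇑π = w := by funext l; simp
  rw [hw] at hkey
  show coef15 σ b (J.image π) (w ∘ ⇑π.symm) ^ 2 = coef15 σ b J w ^ 2
  rw [← hkey]

lemma exists_perm_image {n : ℕ} (I J : Finset (Fin n)) (h : I.card = J.card) :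
    ∃ π : Equiv.Perm (Fin n), I.image π = J := by
  classical
  have e : {x // x ∈ I} ≃ {x // x ∈ J} :=
    (I.equivFin.trans (finCongr (by rw [h]))).trans J.equivFin.symm
  refine ⟨e.extendSubtype, ?_⟩
  apply Finset.eq_of_subset_of_card_le
  · intro y hy
    obtain ⟨x, hx, rfl⟩ := Finset.mem_image.mp hy
    exact e.extendSubtype_mem x hx
  · rw [Finset.card_image_of_injective _ e.extendSubtype.injective, h]

lemma coef15_int_le {n k : ℕ} {σ : ℝ → ℝ} {c : ℝ} (hmeas : Measurable σ)
    (hσc : ∀ t, |σ t| ≤ c) (hkn : k ≤ n) (b : ℝ) (I : Finset (Fin n)) (hI : I.card = k)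
    (μ : Measure (Fin n → ℝ)) [IsProbabilityMeasure μ]
    (hinv : ∀ π : Equiv.Perm (Fin n), μ.map (fun w => w ∘ π) = μ) :
    ∫ w, (coef15 σ b I w)^2 ∂μ ≤ c^2 * ((n.choose k : ℝ))⁻¹ := by
  classical
  have hchoosepos : 0 < (n.choose k : ℝ) := by
    exact_mod_cast Nat.choose_pos hkn
  have hconst : ∀ J ∈ Finset.powersetCard k (Finset.univ : Finset (Fin n)),
      ∫ w, (coef15 σ b J w)^2 ∂μ = ∫ w, (coef15 σ b I w)^2 ∂μ := by
    intro J hJ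
    have hJcard : I.card = J.card := by
      rw [hI, (Finset.mem_powersetCard.mp hJ).2]
    obtain ⟨π, hπ⟩ := exists_perm_image I J hJcard
    rw [← hπ]
    exact coef15_int_perm hmeas b I π μ hinv
  have hsum : (n.choose k : ℝ) * ∫ w, (coef15 σ b I w)^2 ∂μ
      = ∑ J ∈ Finset.powersetCard k (Finset.univ : Finset (Fin n)),
          ∫ w, (coef15 σ b J w)^2 ∂μ := by
    rw [Finset.sum_congr rfl hconst, Finset.sum_const, nsmul_eq_mul]
    congr 1
    simp [Finset.card_powersetCard]
  have hle1 : (∑ J ∈ Finset.powersetCard k (Finset.univ : Finset (Fin n)),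
        ∫ w, (coef15 σ b J w)^2 ∂μ)
      ≤ ∑ J : Finset (Fin n), ∫ w, (coef15 σ b J w)^2 ∂μ :=
    Finset.sum_le_sum_of_subset_of_nonneg (Finset.subset_univ _)
      (fun J _ _ => integral_nonneg (fun w => sq_nonneg _))
  have hle2 : (∑ J : Finset (Fin n), ∫ w, (coef15 σ b J w)^2 ∂μ) ≤ c^2 := by
    rw [← integral_finset_sum _ (fun J _ => coef15_integrable hmeas hσc b J μ)]
    calc ∫ w, ∑ J : Finset (Fin n), (coef15 σ b J w)^2 ∂μ
        ≤ ∫ _w, c^2 ∂μ := by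
          refine integral_mono
            (integrable_finset_sum _ (fun J _ => coef15_integrable hmeas hσc b J μ))
            (integrable_const _) (fun w => coef15_sum_sq_le hσc b w)
      _ = c^2 := by simp
  have : (n.choose k : ℝ) * ∫ w, (coef15 σ b I w)^2 ∂μ ≤ c^2 := by
    rw [hsum]; exact le_trans hle1 hle2
  rw [mul_comm (c^2)]
  rw [← le_div_iff₀' hchoosepos] at this
  rw [div_eq_inv_mul] at this
  exact this

lemma map_eval15 {q : ℕ} {α : Type*} [MeasurableSpace α]
    (μ : Measure α) [IsProbabilityMeasure μ] (i : Fin q) :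
    (Measure.pi fun _ : Fin q => μ).map (fun w => w i) = μ := by
  ext s hs
  rw [Measure.map_apply (measurable_pi_apply i) hs]
  have hpre : (fun w : Fin q → α => w i) ⁻¹' s
      = Set.pi Set.univ (Function.update (fun _ : Fin q => (Set.univ : Set α)) i s) := by
    ext w
    simp only [Set.mem_preimage, Set.mem_pi, Set.mem_univ, true_implies,
      Function.update_apply]
    constructor
    · intro hw j
      by_cases hj : j = i
      · subst hj; simp [hw]
      · simp [hj]
    · intro hw
      have := hw i
      simpa using this
  rw [hpre, Measure.pi_pi]
  rw [Finset.prod_eq_single i (fun j _ hj => by simp [Function.update_apply, hj])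
    (by simp)]
  simp



open MeasureTheory in
/-- FCN hardness, output-layer gradient. In the same setting as the first-layer bound
(one-hidden-layer FCN, uniform input distribution, target parity `χ_I` with `|I| = k`,
rows drawn i.i.d. from a permutation-invariant distribution `μ`), additionally assuming
`|σ| ≤ c`, the expected squared norm of the gradient of the population hinge loss with
respect to the output layer (whose `i`-th entry is `-E_x[σ(⟨w^{(i)},x⟩ + b_i) χ_I(x)]`)
is at most `c² q C(n,k)⁻¹`. -/
theorem stmt_15 (n k q : ℕ) (hk0 : 0 < k) (hkn : k ≤ n) (c : ℝ)
    (I : Finset (Fin n)) (hI : I.card = k)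
    (σ dσ : ℝ → ℝ) (hderiv : ∀ t, HasDerivAt σ (dσ t) t) (hdσ : ∀ t, |dσ t| ≤ 1)
    (hσc : ∀ t, |σ t| ≤ c) (hmeas : Measurable σ)
    (u : Fin q → ℝ) (hu : ∀ i, |u i| ≤ 1) (b : Fin q → ℝ)
    (μ : Measure (Fin n → ℝ)) [IsProbabilityMeasure μ]
    (hinv : ∀ π : Equiv.Perm (Fin n), μ.map (fun w => w ∘ π) = μ)
    (hbound : ∀ᵐ w : Fin q → Fin n → ℝ ∂(Measure.pi fun _ => μ),
      ∀ x : Fin n → Bool,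
        |∑ i : Fin q, u i *
          σ (∑ l : Fin n, w i l * (if x l then (1 : ℝ) else -1) + b i)| ≤ 1) :
    (∫ w : Fin q → Fin n → ℝ,
        (∑ i : Fin q,
          (((2 : ℝ) ^ n)⁻¹ * ∑ x : Fin n → Bool,
            σ (∑ l : Fin n, w i l * (if x l then (1 : ℝ) else -1) + b i) *
              ∏ i' ∈ I, (if x i' then (1 : ℝ) else -1)) ^ 2)
        ∂(Measure.pi fun _ => μ))
      ≤ c ^ 2 * q * ((n.choose k : ℝ))⁻¹ := by
  have hgoal : (fun w : Fin q → Fin n → ℝ =>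
      (∑ i : Fin q,
        (((2 : ℝ) ^ n)⁻¹ * ∑ x : Fin n → Bool,
          σ (∑ l : Fin n, w i l * (if x l then (1 : ℝ) else -1) + b i) *
            ∏ i' ∈ I, (if x i' then (1 : ℝ) else -1)) ^ 2))
      = fun w => ∑ i : Fin q, (coef15 σ (b i) I (w i))^2 := by
    funext w
    simp [coef15, sgn15]
  rw [hgoal]
  have hint : ∀ i : Fin q, Integrable
      (fun w : Fin q → Fin n → ℝ => (coef15 σ (b i) I (w i))^2)
      (Measure.pi fun _ => μ) := by
    intro i
    refine (integrable_const (c^2)).mono'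
      ((((coef15_meas hmeas (b i) I).comp (measurable_pi_apply i)).pow_const
        2).aestronglyMeasurable) (ae_of_all _ fun w => ?_)
    have h := coef15_abs_le hσc (b i) I (w i)
    have h0 : (0:ℝ) ≤ |coef15 σ (b i) I (w i)| := abs_nonneg _
    have : ‖(coef15 σ (b i) I (w i))^2‖ = |coef15 σ (b i) I (w i)|^2 := by
      rw [Real.norm_eq_abs, sq_abs, ← sq_abs, abs_of_nonneg (sq_nonneg _)]
    rw [this]
    nlinarith
  rw [integral_finset_sum _ (fun i _ => hint i)]
  have hmarg : ∀ i : Fin q,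
      (∫ w : Fin q → Fin n → ℝ, (coef15 σ (b i) I (w i))^2 ∂(Measure.pi fun _ => μ))
        = ∫ v, (coef15 σ (b i) I v)^2 ∂μ := by
    intro i
    have h := integral_map (μ := Measure.pi fun _ : Fin q => μ)
      (measurable_pi_apply i).aemeasurable
      (f := fun v => (coef15 σ (b i) I v)^2)
      (by rw [map_eval15]
          exact ((coef15_meas hmeas (b i) I).pow_const 2).aestronglyMeasurable)
    rw [map_eval15] at h
    exact h.symm
  calc (∑ i : Fin q,
        ∫ w : Fin q → Fin n → ℝ, (coef15 σ (b i) I (w i))^2 ∂(Measure.pi fun _ => μ))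
      = ∑ i : Fin q, ∫ v, (coef15 σ (b i) I v)^2 ∂μ :=
        Finset.sum_congr rfl (fun i _ => hmarg i)
    _ ≤ ∑ _i : Fin q, c^2 * ((n.choose k : ℝ))⁻¹ :=
        Finset.sum_le_sum (fun i _ => coef15_int_le hmeas hσc hkn (b i) I hI μ hinv)
    _ = c ^ 2 * q * ((n.choose k : ℝ))⁻¹ := by
        rw [Finset.sum_const, nsmul_eq_mul, Finset.card_univ, Fintype.card_fin]
        ring
end
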